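/- Let D_x > 0, y ∈ R^d with ‖y‖₂ ≤ 1, and x ∈ R^d with ‖x‖₂ ≤ D_x. Define P(y) = (y, √(1-‖y‖₂²), 0) ∈ R^{d+2} and Q(x) = (0.8·x/D_x, 0, √(1 - 0.64‖x‖₂²/D_x²)) ∈ R^{d+2}. Then ‖P(y)‖₂ = ‖Q(x)‖₂ = 1, ⟨Q(x), P(y)⟩ = 0.8⟨x,y⟩/D_x ≤ 0.8, and for any finite set Y of vectors of norm at most 1, argmax_{y∈Y}⟨Q(x),P(y)⟩ = argmax_{y∈Y}⟨x,y⟩. -/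

import Mathlib

/-!
Both maps put a vector of norm at most one into the first `d` coordinates and fill the norm up to
one with a square root in one of the two extra coordinates. These extra coordinates are different
for `P` and `Q`, so `⟪Q x, P y⟫` only sees the first block, which is `⟪(0.8 / Dx) • x, y⟫`; a
positive rescaling preserves the order of inner products, hence the maximisers.
-/

open RealInnerProductSpace

noncomputable def Ptrans {d : ℕ} (y : EuclideanSpace ℝ (Fin d)) :
    EuclideanSpace ℝ (Fin d ⊕ Fin 2) :=
  WithLp.toLp 2 (Sum.elim y ![Real.sqrt (1 - ‖y‖ ^ 2), 0])

noncomputable def Qtrans {d : ℕ} (Dx : ℝ) (x : EuclideanSpace ℝ (Fin d)) :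
    EuclideanSpace ℝ (Fin d ⊕ Fin 2) :=
  WithLp.toLp 2 (Sum.elim (fun i => 0.8 * x i / Dx) ![0, Real.sqrt (1 - 0.64 * ‖x‖ ^ 2 / Dx ^ 2)])

namespace EuclideanSpace

variable {ι κ : Type*} [Fintype ι] [Fintype κ]

lemma inner_toLp_sumElim (u u' : ι → ℝ) (v v' : κ → ℝ) :
    ⟪WithLp.toLp 2 (Sum.elim u v), WithLp.toLp 2 (Sum.elim u' v')⟫ =
      ⟪WithLp.toLp 2 u, WithLp.toLp 2 u'⟫ + ⟪WithLp.toLp 2 v, WithLp.toLp 2 v'⟫ := by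
  simp [PiLp.inner_apply, Fintype.sum_sum_type]

lemma norm_sq_toLp_sumElim (u : ι → ℝ) (v : κ → ℝ) :
    ‖WithLp.toLp 2 (Sum.elim u v)‖ ^ 2 = ‖WithLp.toLp 2 u‖ ^ 2 + ‖WithLp.toLp 2 v‖ ^ 2 := by
  simp only [← real_inner_self_eq_norm_sq, inner_toLp_sumElim]

lemma inner_toLp_fin_two (a b a' b' : ℝ) :
    ⟪WithLp.toLp 2 ![a, b], WithLp.toLp 2 ![a', b']⟫ = a * a' + b * b' := by
  simp [PiLp.inner_apply, Fin.sum_univ_two, mul_comm]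

lemma norm_sq_toLp_fin_two (a b : ℝ) : ‖WithLp.toLp 2 ![a, b]‖ ^ 2 = a ^ 2 + b ^ 2 := by
  rw [← real_inner_self_eq_norm_sq, inner_toLp_fin_two, sq, sq]

lemma norm_toLp_sumElim_fin_two_eq_one {u : EuclideanSpace ℝ ι} {a b : ℝ}
    (h : ‖u‖ ^ 2 + a ^ 2 + b ^ 2 = 1) : ‖WithLp.toLp 2 (Sum.elim u ![a, b])‖ = 1 := by
  rw [← pow_eq_one_iff_of_nonneg (norm_nonneg _) two_ne_zero, norm_sq_toLp_sumElim,
    norm_sq_toLp_fin_two, WithLp.toLp_ofLp, ← h, add_assoc]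

end EuclideanSpace

open EuclideanSpace

section Transforms

variable {d : ℕ} {Dx : ℝ} {x y : EuclideanSpace ℝ (Fin d)}

lemma norm_sq_smul_scale (Dx : ℝ) (x : EuclideanSpace ℝ (Fin d)) :
    ‖(0.8 / Dx) • x‖ ^ 2 = 0.64 * ‖x‖ ^ 2 / Dx ^ 2 := by
  rw [norm_smul, mul_pow, Real.norm_eq_abs, sq_abs]
  ring

lemma Qtrans_eq (Dx : ℝ) (x : EuclideanSpace ℝ (Fin d)) :
    Qtrans Dx x = WithLp.toLp 2
      (Sum.elim ((0.8 / Dx) • x) ![0, Real.sqrt (1 - 0.64 * ‖x‖ ^ 2 / Dx ^ 2)]) := by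
  rw [Qtrans]
  congr 2
  ext i
  simp only [WithLp.ofLp_smul, Pi.smul_apply, smul_eq_mul]
  ring

lemma norm_Ptrans (hy : ‖y‖ ≤ 1) : ‖Ptrans y‖ = 1 := by
  have h : 0 ≤ 1 - ‖y‖ ^ 2 := sub_nonneg.2 (pow_le_one₀ (norm_nonneg y) hy)
  apply norm_toLp_sumElim_fin_two_eq_one
  rw [Real.sq_sqrt h]
  ring

lemma norm_Qtrans (hx : ‖x‖ ≤ Dx) : ‖Qtrans Dx x‖ = 1 := by
  have h : 0 ≤ 1 - 0.64 * ‖x‖ ^ 2 / Dx ^ 2 :=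
    sub_nonneg.2 <| div_le_one_of_le₀ (by nlinarith [norm_nonneg x]) (sq_nonneg Dx)
  rw [Qtrans_eq]
  apply norm_toLp_sumElim_fin_two_eq_one
  rw [norm_sq_smul_scale, Real.sq_sqrt h]
  ring

lemma inner_Qtrans_Ptrans (Dx : ℝ) (x y : EuclideanSpace ℝ (Fin d)) :
    ⟪Qtrans Dx x, Ptrans y⟫ = 0.8 * ⟪x, y⟫ / Dx := by
  rw [Qtrans_eq, Ptrans, inner_toLp_sumElim, inner_toLp_fin_two, WithLp.toLp_ofLp,
    WithLp.toLp_ofLp, real_inner_smul_left]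
  ring

lemma inner_Qtrans_Ptrans_le (hy : ‖y‖ ≤ 1) (hx : ‖x‖ ≤ Dx) :
    ⟪Qtrans Dx x, Ptrans y⟫ ≤ 0.8 := by
  have hxy : ⟪x, y⟫ ≤ Dx := calc
    ⟪x, y⟫ ≤ ‖x‖ * ‖y‖ := real_inner_le_norm x y
    _ ≤ Dx := by nlinarith [norm_nonneg x, norm_nonneg y]
  rw [inner_Qtrans_Ptrans, mul_div_assoc]
  exact mul_le_of_le_one_right (by norm_num) (div_le_one_of_le₀ hxy ((norm_nonneg x).trans hx))

lemma inner_Qtrans_Ptrans_le_iff (hDx : 0 < Dx) {y z : EuclideanSpace ℝ (Fin d)} :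
    ⟪Qtrans Dx x, Ptrans y⟫ ≤ ⟪Qtrans Dx x, Ptrans z⟫ ↔ ⟪x, y⟫ ≤ ⟪x, z⟫ := by
  rw [inner_Qtrans_Ptrans, inner_Qtrans_Ptrans, div_le_div_iff_of_pos_right hDx,
    mul_le_mul_iff_right₀ (by norm_num)]

end Transforms

theorem stmt_13 {d : ℕ} (Dx : ℝ) (hDx : 0 < Dx)
    (y x : EuclideanSpace ℝ (Fin d)) (hy : ‖y‖ ≤ 1) (hx : ‖x‖ ≤ Dx) :
    ‖Ptrans y‖ = 1 ∧ ‖Qtrans Dx x‖ = 1 ∧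
    ⟪Qtrans Dx x, Ptrans y⟫ = 0.8 * ⟪x, y⟫ / Dx ∧
    ⟪Qtrans Dx x, Ptrans y⟫ ≤ 0.8 ∧
    ∀ Y : Finset (EuclideanSpace ℝ (Fin d)), (∀ y' ∈ Y, ‖y'‖ ≤ 1) →
      ∀ z ∈ Y, ((∀ y' ∈ Y, ⟪Qtrans Dx x, Ptrans y'⟫ ≤ ⟪Qtrans Dx x, Ptrans z⟫) ↔
        (∀ y' ∈ Y, ⟪x, y'⟫ ≤ ⟪x, z⟫)) := by
  exact ⟨norm_Ptrans hy, norm_Qtrans hx, inner_Qtrans_Ptrans Dx x y,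
    inner_Qtrans_Ptrans_le hy hx,
    fun _ _ _ _ => forall₂_congr fun _ _ => inner_Qtrans_Ptrans_le_iff hDx⟩
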